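/- Let X be a real separated locally convex space, f ∈ Γ(X), x* ∈ X*, and L := L_{x*} := {u ∈ X : f_∞(u) = ⟨u, x*⟩ and f_∞(−u) = −⟨u, x*⟩}. Then L is a closed linear subspace of X, dom f + L = dom f, (X \ dom f) + L = X \ dom f, and f(x + u) = f(x) + ⟨u, x*⟩ for all x ∈ X and all u ∈ L. -/

import Mathlib

open Filter Topology Set Pointwise TopologicalSpace

noncomputable section

section Defs

variable {E : Type*} [AddCommGroup E] [Module ℝ E]

/-- Recession function of `f` based at `x₀ ∈ dom f`, as the supremum of the
(nondecreasing) difference quotients `(f (x₀ + t • u) - f x₀) / t`, `t > 0`. -/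
def recAt (f : E → EReal) (x₀ u : E) : EReal :=
  ⨆ t ∈ Set.Ioi (0 : ℝ), ((t⁻¹ : ℝ) : EReal) * (f (x₀ + t • u) - f x₀)

/-- Sublinear function: positively homogeneous and subadditive. -/
def SublinearFn (g : E → EReal) : Prop :=
  g 0 = 0 ∧ (∀ x : E, ∀ t : ℝ, 0 < t → g (t • x) = (t : EReal) * g x) ∧
    ∀ x y : E, g (x + y) ≤ g x + g y

variable [TopologicalSpace E]

/-- `Γ(E)`: proper lower semicontinuous convex functions. -/
def GammaFn (f : E → EReal) : Prop :=
  (∃ x, f x ≠ ⊤) ∧ (∀ x, f x ≠ ⊥) ∧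
    Convex ℝ {p : E × ℝ | f p.1 ≤ (p.2 : EReal)} ∧ LowerSemicontinuous f

/-- Subdifferential at `0`, as a subset of the weak* dual. -/
def subdiff0 (g : E → EReal) : Set (WeakDual ℝ E) :=
  {xs | ∀ x, (xs x : EReal) ≤ g x}

/-- Fenchel conjugate. -/
def conjFn (f : E → EReal) (xs : WeakDual ℝ E) : EReal :=
  ⨆ x, ((xs x : EReal) - f x)

/-- Domain of the conjugate. -/
def domConj (f : E → EReal) : Set (WeakDual ℝ E) := {xs | conjFn f xs ≠ ⊤}

/-- `xs ∈ ∂f(x)`. -/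
def inSubdiff (f : E → EReal) (xs : WeakDual ℝ E) (x : E) : Prop :=
  f x ≠ ⊤ ∧ f x ≠ ⊥ ∧ ∀ x' : E, ((xs x' - xs x : ℝ) : EReal) + f x ≤ f x'

/-- Directionally coercive function. -/
def DirCoercive (f : E → EReal) : Prop :=
  ∀ x : E, ∀ u : E, u ≠ 0 → Filter.Tendsto (fun t : ℝ => f (x + t • u)) Filter.atTop (nhds ⊤)

/-- The set `L_{x*} = {x | g(x) = ⟨x, x*⟩ and g(-x) = -⟨x, x*⟩}`. -/
def LxSet (g : E → EReal) (xs : WeakDual ℝ E) : Set E :=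
  {x | g x = (xs x : EReal) ∧ g (-x) = ((-(xs x) : ℝ) : EReal)}

end Defs

section QRI

variable {F : Type*} [AddCommGroup F] [Module ℝ F] [TopologicalSpace F]

/-- The cone `ℝ₊ (A - a)`. -/
def coneGen (A : Set F) (a : F) : Set F :=
  {x | ∃ t : ℝ, 0 ≤ t ∧ ∃ b ∈ A, x = t • (b - a)}

/-- Quasi-relative interior. -/
def qri (A : Set F) : Set F :=
  {a ∈ A | ∃ S : Submodule ℝ F, closure (coneGen A a) = (S : Set F)}

/-- Quasi-interior. -/
def qi (A : Set F) : Set F :=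
  {a ∈ A | closure (coneGen A a) = Set.univ}

/-- Algebraic core of a set. -/
def coreSet (A : Set F) : Set F :=
  {a : F | ∀ u : F, ∃ δ : ℝ, 0 < δ ∧ ∀ t ∈ Set.Icc (0 : ℝ) δ, a + t • u ∈ A}

end QRI

/-! The directions `u` with `f (x + t • u) ≤ f x + t * x* u` for all `x` and all `t > 0` form a
convex cone `K`, and `L_{x*}` is its lineality space `K ∩ -K`. Convexity and lower
semicontinuity make this condition independent of the base point: a bound along the ray from `x₀`
passes to the ray from any `x ∈ dom f` through the chords from `x` to the far points `x₀ + s • u`,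
letting `s → ∞` in the closed epigraph. Hence `f_∞ u ≤ x* u ↔ u ∈ K`, so `K` is closed, and for
`u ∈ K ∩ -K` the two inequalities at `t = 1` give `f (x + u) = f x + x* u`. -/

section Recession

variable {X : Type*} [AddCommGroup X] [Module ℝ X] {f : X → EReal} {x₀ u : X}

theorem recAt_le_coe_iff (hx₀ : f x₀ ≠ ⊤) (hx₀' : f x₀ ≠ ⊥) {r : ℝ} :
    recAt f x₀ u ≤ r ↔ ∀ t : ℝ, 0 < t → f (x₀ + t • u) ≤ f x₀ + ((t * r : ℝ) : EReal) := by
  simp only [recAt, iSup₂_le_iff, Set.mem_Ioi]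
  refine forall₂_congr fun t ht => ?_
  rw [EReal.coe_inv, mul_comm, ← div_eq_mul_inv,
    EReal.div_le_iff_le_mul (EReal.coe_pos.2 ht) (EReal.coe_ne_top t),
    EReal.sub_le_iff_le_add (.inl hx₀') (.inl hx₀), add_comm _ (f x₀), EReal.coe_mul]

theorem apply_smul_add_smul_le (hconv : Convex ℝ {p : X × ℝ | f p.1 ≤ (p.2 : EReal)})
    {x y : X} {a c θ : ℝ} (hx : f x ≤ (a : EReal)) (hy : f y ≤ (c : EReal))
    (h0 : 0 ≤ θ) (h1 : θ ≤ 1) :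
    f (θ • x + (1 - θ) • y) ≤ ((θ * a + (1 - θ) * c : ℝ) : EReal) := by
  have := hconv (a := θ) (b := 1 - θ) (x := (x, a)) (y := (y, c)) hx hy h0 (by linarith) (by ring)
  simpa only [Set.mem_ofPred_eq, Prod.smul_mk, Prod.mk_add_mk, smul_eq_mul] using this

end Recession

theorem IsClosed.lineal {R E : Type*} [Ring R] [LinearOrder R] [IsOrderedRing R]
    [AddCommGroup E] [Module R E] [TopologicalSpace E] [ContinuousNeg E] {C : PointedCone R E}
    (hC : IsClosed (C : Set E)) : IsClosed (C.lineal : Set E) :=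
  hC.inter (hC.preimage continuous_neg)

section Cone

variable {X : Type*} [AddCommGroup X] [Module ℝ X] [TopologicalSpace X]

def slopeLeCone (f : X → EReal) (xs : WeakDual ℝ X) : PointedCone ℝ X where
  carrier := {u | ∀ x, ∀ t : ℝ, 0 < t → f (x + t • u) ≤ f x + ((t * xs u : ℝ) : EReal)}
  zero_mem' := by simp
  add_mem' {u v} hu hv x t ht :=
    calc f (x + t • (u + v)) = f ((x + t • u) + t • v) := by rw [smul_add, add_assoc]
      _ ≤ f (x + t • u) + ((t * xs v : ℝ) : EReal) := hv _ t ht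
      _ ≤ f x + ((t * xs u : ℝ) : EReal) + ((t * xs v : ℝ) : EReal) := by gcongr; exact hu x t ht
      _ = f x + ((t * xs (u + v) : ℝ) : EReal) := by
        rw [add_assoc, ← EReal.coe_add, map_add, mul_add]
  smul_mem' := by
    rintro ⟨c, hc⟩ u hu x t ht
    rw [Nonneg.mk_smul, smul_smul, map_smul, smul_eq_mul, ← mul_assoc]
    rcases hc.eq_or_lt with hc | hc
    · simp [← hc]
    · exact hu x _ (mul_pos ht hc)

variable {f : X → EReal} {xs : WeakDual ℝ X} {x₀ u : X}

theorem le_apply_add_of_neg_mem_slopeLeCone (hu : -u ∈ slopeLeCone f xs) (x : X) :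
    f x + ((xs u : ℝ) : EReal) ≤ f (x + u) := by
  have h := hu (x + u) 1 one_pos
  rw [one_smul, add_neg_cancel_right, one_mul, map_neg, EReal.coe_neg, ← sub_eq_add_neg] at h
  exact (EReal.le_sub_iff_add_le (.inl (EReal.coe_ne_bot _)) (.inl (EReal.coe_ne_top _))).1 h

theorem apply_add_of_mem_lineal (hu : u ∈ (slopeLeCone f xs).lineal) (x : X) :
    f (x + u) = f x + ((xs u : ℝ) : EReal) := by
  refine le_antisymm ?_ (le_apply_add_of_neg_mem_slopeLeCone hu.2 x)
  simpa using hu.1 x 1 one_pos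

theorem recAt_eq_of_mem_lineal (hx₀ : f x₀ ≠ ⊤) (hx₀' : f x₀ ≠ ⊥)
    (hu : u ∈ (slopeLeCone f xs).lineal) : recAt f x₀ u = xs u := by
  refine le_antisymm ((recAt_le_coe_iff hx₀ hx₀').2 fun t ht => hu.1 x₀ t ht) ?_
  calc ((xs u : ℝ) : EReal) ≤ f (x₀ + u) - f x₀ := by
        rw [EReal.le_sub_iff_add_le (.inl hx₀') (.inl hx₀), add_comm]
        exact le_apply_add_of_neg_mem_slopeLeCone hu.2 x₀
    _ = ((1⁻¹ : ℝ) : EReal) * (f (x₀ + (1 : ℝ) • u) - f x₀) := by simp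
    _ ≤ recAt f x₀ u :=
      le_biSup (fun t : ℝ => ((t⁻¹ : ℝ) : EReal) * (f (x₀ + t • u) - f x₀)) (Set.mem_Ioi.2 one_pos)

end Cone

section Closed

variable {X : Type*} [AddCommGroup X] [Module ℝ X] [TopologicalSpace X]
  [IsTopologicalAddGroup X] [ContinuousSMul ℝ X] {f : X → EReal} {xs : WeakDual ℝ X} {x₀ u : X}

theorem apply_add_smul_le_of_ray (hbot : ∀ x, f x ≠ ⊥)
    (hconv : Convex ℝ {p : X × ℝ | f p.1 ≤ (p.2 : EReal)}) (hlsc : LowerSemicontinuous f)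
    (hx₀ : f x₀ ≠ ⊤) {r : ℝ}
    (hray : ∀ s : ℝ, 0 < s → f (x₀ + s • u) ≤ f x₀ + ((s * r : ℝ) : EReal))
    (x : X) {t : ℝ} (ht : 0 < t) : f (x + t • u) ≤ f x + ((t * r : ℝ) : EReal) := by
  by_cases hx : f x = ⊤
  · rw [hx, EReal.top_add_coe]
    exact le_top
  obtain ⟨a, ha⟩ : ∃ a : ℝ, f x = a := ⟨_, (EReal.coe_toReal hx (hbot x)).symm⟩
  obtain ⟨b, hb⟩ : ∃ b : ℝ, f x₀ = b := ⟨_, (EReal.coe_toReal hx₀ (hbot x₀)).symm⟩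
  simp only [hb, ← EReal.coe_add] at hray
  rw [ha, ← EReal.coe_add]
  -- `chord θ` combines `(x₀ + (t / θ) • u, b + (t / θ) * r)` and `(x, a)` with weights `θ`, `1 - θ`
  set chord : ℝ → X × EReal :=
    fun θ => (x + t • u + θ • (x₀ - x), ((a + t * r + θ * (b - a) : ℝ) : EReal))
  have hchord : ∀ θ ∈ Set.Ioo (0 : ℝ) 1, chord θ ∈ {p : X × EReal | f p.1 ≤ p.2} := by
    rintro θ ⟨hθ0, hθ1⟩
    have := apply_smul_add_smul_le hconv (hray (t / θ) (div_pos ht hθ0)) ha.le hθ0.le hθ1.le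
    change f (x + t • u + θ • (x₀ - x)) ≤ ((a + t * r + θ * (b - a) : ℝ) : EReal)
    convert this using 2
    · rw [smul_add, smul_smul, mul_div_cancel₀ _ hθ0.ne', smul_sub, sub_smul, one_smul]
      abel
    · field_simp
      ring
  have hlim : Tendsto chord (𝓝[>] 0) (𝓝 (x + t • u, ((a + t * r : ℝ) : EReal))) := by
    have hcont : Continuous chord :=
      .prodMk (by fun_prop) (continuous_coe_real_ereal.comp (by fun_prop))
    simpa [chord] using (hcont.tendsto 0).mono_left nhdsWithin_le_nhds
  exact hlsc.isClosed_epigraph.mem_of_tendsto hlim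
    (Filter.eventually_of_mem (Ioo_mem_nhdsGT one_pos) hchord)

theorem mem_slopeLeCone_iff (hbot : ∀ x, f x ≠ ⊥)
    (hconv : Convex ℝ {p : X × ℝ | f p.1 ≤ (p.2 : EReal)}) (hlsc : LowerSemicontinuous f)
    (hx₀ : f x₀ ≠ ⊤) :
    u ∈ slopeLeCone f xs ↔
      ∀ t : ℝ, 0 < t → f (x₀ + t • u) ≤ f x₀ + ((t * xs u : ℝ) : EReal) :=
  ⟨fun hu => hu x₀, fun hray x _ ht => apply_add_smul_le_of_ray hbot hconv hlsc hx₀ hray x ht⟩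

theorem isClosed_slopeLeCone (hbot : ∀ x, f x ≠ ⊥)
    (hconv : Convex ℝ {p : X × ℝ | f p.1 ≤ (p.2 : EReal)}) (hlsc : LowerSemicontinuous f)
    (hx₀ : f x₀ ≠ ⊤) : IsClosed (slopeLeCone f xs : Set X) := by
  obtain ⟨b, hb⟩ : ∃ b : ℝ, f x₀ = b := ⟨_, (EReal.coe_toReal hx₀ (hbot x₀)).symm⟩
  have hcone : (slopeLeCone f xs : Set X) = ⋂ t ∈ Set.Ioi (0 : ℝ),
      (fun u => (x₀ + t • u, ((b + t * xs u : ℝ) : EReal))) ⁻¹' {p : X × EReal | f p.1 ≤ p.2} := by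
    ext u
    simp only [SetLike.mem_coe, mem_slopeLeCone_iff hbot hconv hlsc hx₀, hb, ← EReal.coe_add,
      Set.mem_iInter, Set.mem_preimage, Set.mem_ofPred_eq, Set.mem_Ioi]
  rw [hcone]
  exact isClosed_biInter fun t _ => hlsc.isClosed_epigraph.preimage <|
    .prodMk (by fun_prop) (continuous_coe_real_ereal.comp (by fun_prop))

theorem lxSet_recAt_eq_lineal (hbot : ∀ x, f x ≠ ⊥)
    (hconv : Convex ℝ {p : X × ℝ | f p.1 ≤ (p.2 : EReal)}) (hlsc : LowerSemicontinuous f)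
    (hx₀ : f x₀ ≠ ⊤) : LxSet (recAt f x₀) xs = (slopeLeCone f xs).lineal := by
  have hmem {v : X} (hv : recAt f x₀ v ≤ xs v) : v ∈ slopeLeCone f xs :=
    (mem_slopeLeCone_iff hbot hconv hlsc hx₀).2 ((recAt_le_coe_iff hx₀ (hbot x₀)).1 hv)
  ext u
  constructor
  · rintro ⟨hu, hnu⟩
    exact ⟨hmem hu.le, hmem (by rw [map_neg]; exact hnu.le)⟩
  · intro hu
    refine ⟨recAt_eq_of_mem_lineal hx₀ (hbot x₀) hu, ?_⟩
    rw [recAt_eq_of_mem_lineal hx₀ (hbot x₀) (neg_mem hu), map_neg]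

end Closed

variable {X : Type*}

theorem stmt14_general [AddCommGroup X] [Module ℝ X] [TopologicalSpace X] [IsTopologicalAddGroup X]
    [ContinuousSMul ℝ X]
    (f : X → EReal) (hf : GammaFn f) (x₀ : X) (hx₀ : f x₀ ≠ ⊤)
    (xs : WeakDual ℝ X) :
    IsClosed (LxSet (recAt f x₀) xs) ∧
    (∃ S : Submodule ℝ X, LxSet (recAt f x₀) xs = (S : Set X)) ∧
    {x : X | f x ≠ ⊤} + LxSet (recAt f x₀) xs = {x : X | f x ≠ ⊤} ∧
    {x : X | f x = ⊤} + LxSet (recAt f x₀) xs = {x : X | f x = ⊤} ∧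
    ∀ x : X, ∀ u ∈ LxSet (recAt f x₀) xs, f (x + u) = f x + ((xs u : ℝ) : EReal) := by
  obtain ⟨-, hbot, hconv, hlsc⟩ := hf
  set L := (slopeLeCone f xs).lineal
  rw [lxSet_recAt_eq_lineal hbot hconv hlsc hx₀]
  have htrans : ∀ x, ∀ u ∈ L, f (x + u) = f x + ((xs u : ℝ) : EReal) :=
    fun x _ hu => apply_add_of_mem_lineal hu x
  refine ⟨(isClosed_slopeLeCone hbot hconv hlsc hx₀).lineal, ⟨L, rfl⟩, ?_, ?_, htrans⟩
  · refine (Set.add_subset_iff.2 fun x hx u hu => ?_).antisymm (Set.subset_add_left _ L.zero_mem)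
    rw [Set.mem_ofPred_eq, htrans x u hu]
    exact EReal.add_ne_top hx (EReal.coe_ne_top _)
  · refine (Set.add_subset_iff.2 fun x hx u hu => ?_).antisymm (Set.subset_add_left _ L.zero_mem)
    rw [Set.mem_ofPred_eq, htrans x u hu, hx, EReal.top_add_coe]

theorem stmt14 [AddCommGroup X] [Module ℝ X] [TopologicalSpace X] [IsTopologicalAddGroup X]
    [ContinuousSMul ℝ X] [LocallyConvexSpace ℝ X] [T2Space X]
    (f : X → EReal) (hf : GammaFn f) (x₀ : X) (hx₀ : f x₀ ≠ ⊤)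
    (xs : WeakDual ℝ X) :
    IsClosed (LxSet (recAt f x₀) xs) ∧
    (∃ S : Submodule ℝ X, LxSet (recAt f x₀) xs = (S : Set X)) ∧
    {x : X | f x ≠ ⊤} + LxSet (recAt f x₀) xs = {x : X | f x ≠ ⊤} ∧
    {x : X | f x = ⊤} + LxSet (recAt f x₀) xs = {x : X | f x = ⊤} ∧
    ∀ x : X, ∀ u ∈ LxSet (recAt f x₀) xs, f (x + u) = f x + ((xs u : ℝ) : EReal) :=
  stmt14_general f hf x₀ hx₀ xs
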